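/- Let N ≥ 1, K ≥ 0, let D_0,…,D_K be N×N real matrices and E_0,…,E_{K−1} be N×N real matrices. Define recursively Q_0 = D_0, and for k = 0,…,K−1, U_k = Q_k^{−1}E_kᵀ and Q_{k+1} = D_{k+1} − E_kU_k, assuming Q_0,…,Q_{K−1} are invertible. Let T be the (K+1)N×(K+1)N block tridiagonal matrix with diagonal blocks T_{k,k} = D_k, subdiagonal blocks T_{k+1,k} = E_k, superdiagonal blocks T_{k,k+1} = E_kᵀ, and all other blocks zero. Let L be the block lower bidiagonal matrix with L_{k,k} = Q_k and L_{k+1,k} = E_k (other blocks zero), and let R be the block upper bidiagonal matrix with R_{k,k} = I and R_{k,k+1} = U_k (other blocks zero). Then T = L·R. -/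

import Mathlib

open Matrix

/-- The Schur-complement recursion `Q₀ = D₀`, `Q_{k+1} = D_{k+1} − E_k (Q_k⁻¹ E_kᵀ)`. -/
noncomputable def Qrec {N : ℕ} (D E : ℕ → Matrix (Fin N) (Fin N) ℝ) :
    ℕ → Matrix (Fin N) (Fin N) ℝ
  | 0 => D 0
  | k + 1 => D (k + 1) - E k * ((Qrec D E k)⁻¹ * (E k)ᵀ)

/-- The `(K+1)N × (K+1)N` block tridiagonal matrix with diagonal blocks `D_k`,
subdiagonal blocks `E_k` and superdiagonal blocks `E_kᵀ`. -/
noncomputable def blockTridiag (K N : ℕ) (D E : ℕ → Matrix (Fin N) (Fin N) ℝ) :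
    Matrix (Fin (K + 1) × Fin N) (Fin (K + 1) × Fin N) ℝ :=
  fun p q =>
    if (p.1 : ℕ) = (q.1 : ℕ) then D (p.1 : ℕ) p.2 q.2
    else if (p.1 : ℕ) = (q.1 : ℕ) + 1 then E (q.1 : ℕ) p.2 q.2
    else if (q.1 : ℕ) = (p.1 : ℕ) + 1 then (E (p.1 : ℕ))ᵀ p.2 q.2
    else 0

/-- The block lower bidiagonal matrix with diagonal blocks `Q_k` and subdiagonal
blocks `E_k`. -/
noncomputable def blockLower (K N : ℕ) (Q E : ℕ → Matrix (Fin N) (Fin N) ℝ) :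
    Matrix (Fin (K + 1) × Fin N) (Fin (K + 1) × Fin N) ℝ :=
  fun p q =>
    if (p.1 : ℕ) = (q.1 : ℕ) then Q (p.1 : ℕ) p.2 q.2
    else if (p.1 : ℕ) = (q.1 : ℕ) + 1 then E (q.1 : ℕ) p.2 q.2
    else 0

/-- The block upper bidiagonal matrix with identity diagonal blocks and superdiagonal
blocks `U_k`. -/
noncomputable def blockUpper (K N : ℕ) (U : ℕ → Matrix (Fin N) (Fin N) ℝ) :
    Matrix (Fin (K + 1) × Fin N) (Fin (K + 1) × Fin N) ℝ :=
  fun p q =>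
    if (p.1 : ℕ) = (q.1 : ℕ) then (1 : Matrix (Fin N) (Fin N) ℝ) p.2 q.2
    else if (q.1 : ℕ) = (p.1 : ℕ) + 1 then U (p.1 : ℕ) p.2 q.2
    else 0

/-!
Viewing a `(K+1)N`-square matrix as a `(K+1)`-square matrix of `N × N` blocks
(`Matrix.compRingEquiv`) turns the claim into the LU factorisation of a tridiagonal matrix over
the noncommutative ring of blocks. Entry `(i, j)` of `L R` has at most two nonzero terms,
`k = i` and `k = i - 1`: on the diagonal they give `Q_i + E_{i-1} U_{i-1} = D_i`, which is the
recursion defining `Q_i`, and on the superdiagonal `Q_i U_i = E_iᵀ`, which is where the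
invertibility of `Q_i` enters.
-/

open Finset

section Bidiagonal

variable {A : Type*} [Ring A]

/- Entries of ℕ-indexed band matrices, so that block indices can be shifted without `Fin`
arithmetic; `Matrix.of` restricts them to `Fin (n + 1)`. -/
def lowerBidiag (d s : ℕ → A) (i j : ℕ) : A :=
  if i = j then d i else if i = j + 1 then s j else 0

def upperBidiag (u : ℕ → A) (i j : ℕ) : A :=
  if i = j then 1 else if j = i + 1 then u i else 0

def tridiag (c s t : ℕ → A) (i j : ℕ) : A :=
  if i = j then c i else if i = j + 1 then s j else if j = i + 1 then t i else 0

theorem sum_range_lowerBidiag_zero_mul (d s M : ℕ → A) (n : ℕ) :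
    ∑ k ∈ range (n + 1), lowerBidiag d s 0 k * M k = d 0 * M 0 := by
  simp [lowerBidiag, eq_comm (a := 0)]

theorem sum_range_lowerBidiag_succ_mul (d s M : ℕ → A) {m n : ℕ} (hm : m < n) :
    ∑ k ∈ range (n + 1), lowerBidiag d s (m + 1) k * M k =
      d (m + 1) * M (m + 1) + s m * M m := by
  rw [sum_eq_add (m + 1) m (by omega)]
  · simp [lowerBidiag]
  · intro k _ hk
    simp [lowerBidiag, Ne.symm hk.1, hk.2.symm]
  all_goals intro h; simp at h; omega

theorem tridiag_eq_sum_range {c d s t u : ℕ → A} {n : ℕ} (hc0 : c 0 = d 0)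
    (hc : ∀ k, c (k + 1) = d (k + 1) + s k * u k) (ht : ∀ k < n, t k = d k * u k)
    {i j : ℕ} (hi : i ≤ n) (hj : j ≤ n) :
    tridiag c s t i j = ∑ k ∈ range (n + 1), lowerBidiag d s i k * upperBidiag u k j := by
  rcases i with _ | m
  · rw [sum_range_lowerBidiag_zero_mul]
    rcases j with _ | _ | j
    · simp [tridiag, upperBidiag, hc0]
    · simp [tridiag, upperBidiag, ht 0 (by omega)]
    · simp [tridiag, upperBidiag]
  · rw [sum_range_lowerBidiag_succ_mul _ _ _ (by omega : m < n)]
    unfold tridiag upperBidiag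
    split_ifs <;> first | omega | (subst_vars; simp_all)

theorem of_tridiag_eq_mul {c d s t u : ℕ → A} {n : ℕ} (hc0 : c 0 = d 0)
    (hc : ∀ k, c (k + 1) = d (k + 1) + s k * u k) (ht : ∀ k < n, t k = d k * u k) :
    (of fun i j : Fin (n + 1) => tridiag c s t i j) =
      (of fun i j : Fin (n + 1) => lowerBidiag d s i j) *
        of fun i j : Fin (n + 1) => upperBidiag u i j := by
  ext i j
  rw [mul_apply, of_apply, tridiag_eq_sum_range hc0 hc ht (Fin.is_le i) (Fin.is_le j),
    ← Fin.sum_univ_eq_sum_range (fun k => lowerBidiag d s i k * upperBidiag u k j)]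
  rfl

end Bidiagonal

section Blocks

variable {K N : ℕ}

theorem blockTridiag_eq_compRingEquiv (D E : ℕ → Matrix (Fin N) (Fin N) ℝ) :
    blockTridiag K N D E = compRingEquiv _ _ _
      (of fun i j : Fin (K + 1) => tridiag D E (fun k => (E k)ᵀ) i j) := by
  ext ⟨i, a⟩ ⟨j, b⟩
  simp only [blockTridiag, tridiag, compRingEquiv_apply, comp_apply, of_apply]
  split_ifs <;> rfl

theorem blockLower_eq_compRingEquiv (Q E : ℕ → Matrix (Fin N) (Fin N) ℝ) :
    blockLower K N Q E = compRingEquiv _ _ _ (of fun i j : Fin (K + 1) => lowerBidiag Q E i j) := by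
  ext ⟨i, a⟩ ⟨j, b⟩
  simp only [blockLower, lowerBidiag, compRingEquiv_apply, comp_apply, of_apply]
  split_ifs <;> rfl

theorem blockUpper_eq_compRingEquiv (U : ℕ → Matrix (Fin N) (Fin N) ℝ) :
    blockUpper K N U = compRingEquiv _ _ _ (of fun i j : Fin (K + 1) => upperBidiag U i j) := by
  ext ⟨i, a⟩ ⟨j, b⟩
  simp only [blockUpper, upperBidiag, compRingEquiv_apply, comp_apply, of_apply]
  split_ifs <;> rfl

end Blocks

theorem block_tridiagonal_LU_general (N K : ℕ)
    (D E : ℕ → Matrix (Fin N) (Fin N) ℝ)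
    (hQ : ∀ k < K, IsUnit (Qrec D E k)) :
    blockTridiag K N D E =
      blockLower K N (Qrec D E) E *
        blockUpper K N (fun k => (Qrec D E k)⁻¹ * (E k)ᵀ) := by
  have hLU := of_tridiag_eq_mul (n := K) (c := D) (d := Qrec D E) (s := E)
    (t := fun k => (E k)ᵀ) (u := fun k => (Qrec D E k)⁻¹ * (E k)ᵀ) rfl
    (fun k => (sub_add_cancel _ _).symm)
    (fun k hk => (mul_nonsing_inv_cancel_left _ _ ((isUnit_iff_isUnit_det _).mp (hQ k hk))).symm)
  rw [blockTridiag_eq_compRingEquiv, blockLower_eq_compRingEquiv, blockUpper_eq_compRingEquiv,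
    ← map_mul, hLU]

/-- block LU factorization of a block tridiagonal matrix:
`T = L · R` where `L` has blocks `Q_k` (diagonal) and `E_k` (subdiagonal), and `R`
has identity diagonal blocks and superdiagonal blocks `U_k = Q_k⁻¹ E_kᵀ`. -/
theorem block_tridiagonal_LU (N K : ℕ) (hN : 1 ≤ N)
    (D E : ℕ → Matrix (Fin N) (Fin N) ℝ)
    (hQ : ∀ k < K, IsUnit (Qrec D E k)) :
    blockTridiag K N D E =
      blockLower K N (Qrec D E) E *
        blockUpper K N (fun k => (Qrec D E k)⁻¹ * (E k)ᵀ) :=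
  block_tridiagonal_LU_general N K D E hQ
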